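/- arXiv:2409.08211 — 3 statements merged into one kernel-verified Lean document; each statement's English description precedes it below -/
import Mathlib

section
/- Let Φ ∈ ℝ^{N×D} and let (Φ̂_n)_{n∈ℕ} be a sequence in ℝ^{M×D}. Set δ_n := ‖Φ̂_n − PΦ‖_F and let (ω_n)_{n∈ℕ} be a sequence of positive reals. Assume (i) δ_n → 0, (ii) ω_n → 0, and (iii) δ_n²/ω_n → 0 as n → ∞. For each n, let Φ_n* ∈ ℝ^{N×D} be a minimizer over ℝ^{N×D} of J_n(Θ) := (1/2)‖PΘ − Φ̂_n‖_F² + ω_n R(Θ). Then Φ_n* converges, as n → ∞, to the unique matrix Φ_∞* minimizing R(Θ) over the set {Θ ∈ ℝ^{N×D} : PΘ = PΦ}. -/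
open Matrix Filter Topology

/-- The Frobenius norm of a real matrix. -/
noncomputable def frobNorm {m n : ℕ} (A : Matrix (Fin m) (Fin n) ℝ) : ℝ :=
  Real.sqrt (Matrix.trace (Aᵀ * A))

/-- The matrix `(I_M 0) ∈ ℝ^{M×N}` extracting the first `M` rows. -/
def extractP (M N : ℕ) : Matrix (Fin M) (Fin N) ℝ :=
  Matrix.of fun i j => if (i : ℕ) = (j : ℕ) then 1 else 0

/-!
With `⟨U, V⟩_B := tr (Uᵀ B V)` the regularizer is `R Θ = ⟨Θ, Θ⟩_B`, a positive definite quadratic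
form, so `c ‖Θ‖² ≤ R Θ` for some `c > 0` (compactness of the unit sphere). Hence `R` attains its
minimum on the affine space `{Θ | P Θ = P Φ}` at some `Φ∞`, and since the derivative vanishes there,
`⟨Φ∞, V⟩_B = 0` for all `V ∈ ker P`; this gives `R (Φ∞ + V) = R Φ∞ + R V`, hence uniqueness.

For convergence, compare `J_n (Φ_n*)` with `J_n (Φ∞)`. Since `R ≥ 0`, the residual satisfies
`‖P Φ_n* - Φ̂_n‖² ≤ δ_n² + 2 ω_n R Φ∞ → 0`, so `P E_n → 0` for `E_n := Φ_n* - Φ∞`. The functional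
`⟨Φ∞, ·⟩_B` vanishes on `ker P`, so it factors through `P` and `⟨Φ∞, E_n⟩_B → 0`. Finally
`R E_n = R Φ_n* - R Φ∞ - 2 ⟨Φ∞, E_n⟩_B ≤ δ_n² / (2 ω_n) - 2 ⟨Φ∞, E_n⟩_B → 0`, and coercivity gives
`E_n → 0`.
-/

theorem tendsto_zero_of_norm_sq_le {ι E : Type*} [SeminormedAddCommGroup E] {l : Filter ι}
    {f : ι → E} {u : ι → ℝ} (hu : Tendsto u l (𝓝 0)) (hf : ∀ i, ‖f i‖ ^ 2 ≤ u i) :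
    Tendsto f l (𝓝 0) := by
  refine squeeze_zero_norm (fun i => ?_) (by simpa using hu.sqrt)
  simpa using Real.abs_le_sqrt (hf i)

theorem LinearMap.tendsto_zero_of_ker_le_ker {ι V W : Type*} {l : Filter ι} [AddCommGroup V]
    [Module ℝ V] [NormedAddCommGroup W] [NormedSpace ℝ W] [FiniteDimensional ℝ W]
    {A : V →ₗ[ℝ] W} {ℓ : V →ₗ[ℝ] ℝ} (hker : LinearMap.ker A ≤ LinearMap.ker ℓ) {x : ι → V}
    (hx : Tendsto (fun i => A (x i)) l (𝓝 0)) : Tendsto (fun i => ℓ (x i)) l (𝓝 0) := by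
  have hℓ : ℓ ∈ LinearMap.range A.dualMap := by
    rw [LinearMap.range_dualMap_eq_dualAnnihilator_ker, Submodule.mem_dualAnnihilator]
    exact fun v hv => hker hv
  obtain ⟨φ, rfl⟩ := hℓ
  have := (φ.continuous_of_finiteDimensional.tendsto 0).comp hx
  rwa [map_zero] at this

namespace LinearMap.BilinForm

section ConstrainedMinimum

variable {V W : Type*} [AddCommGroup V] [Module ℝ V] [AddCommGroup W] [Module ℝ W]
  {b : LinearMap.BilinForm ℝ V} {A : V →ₗ[ℝ] W} {w : W} {x : V}

theorem apply_add_add_self (hb : b.IsSymm) (u v : V) :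
    b (u + v) (u + v) = b u u + 2 * b u v + b v v := by
  simp only [map_add, LinearMap.add_apply, hb.eq v u]
  ring

theorem apply_eq_zero_of_isMinOn (hb : b.IsSymm)
    (hmin : IsMinOn (fun z => b z z) {z | A z = w} x) (hx : A x = w) {v : V} (hv : A v = 0) :
    b x v = 0 := by
  have hquad : ∀ t : ℝ, 0 ≤ b v v * (t * t) + 2 * b x v * t + 0 := fun t => by
    have hmem : A (x + t • v) = w := by simp [hx, hv]
    have : b x x ≤ b (x + t • v) (x + t • v) := hmin hmem
    simp only [b.apply_add_add_self hb, map_smul, LinearMap.smul_apply, smul_eq_mul] at this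
    linarith
  have := discrim_le_zero hquad
  simp only [discrim] at this
  nlinarith [sq_nonneg (b x v)]

theorem eq_of_isMinOn (hb : b.IsSymm) (hpos : ∀ v ≠ 0, 0 < b v v)
    (hmin : IsMinOn (fun z => b z z) {z | A z = w} x) (hx : A x = w) {y : V}
    (hmin' : IsMinOn (fun z => b z z) {z | A z = w} y) (hy : A y = w) : y = x := by
  have horth : b x (y - x) = 0 := b.apply_eq_zero_of_isMinOn hb hmin hx (by simp [hx, hy])
  have hle : b y y ≤ b x x := hmin' hx
  have hexp := b.apply_add_add_self hb x (y - x)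
  rw [add_sub_cancel, horth] at hexp
  by_contra hne
  have := hpos (y - x) (sub_ne_zero.mpr hne)
  linarith

end ConstrainedMinimum

section FiniteDimensional

variable {ι V W : Type*} {l : Filter ι} [NormedAddCommGroup V] [NormedSpace ℝ V]
  [FiniteDimensional ℝ V] [NormedAddCommGroup W] [NormedSpace ℝ W]

theorem continuous_apply_self (b : LinearMap.BilinForm ℝ V) : Continuous fun v => b v v :=
  b.toContinuousBilinearMap.continuous₂.comp (continuous_id.prodMk continuous_id)

variable {b : LinearMap.BilinForm ℝ V}

theorem exists_pos_mul_norm_sq_le (hpos : ∀ v ≠ 0, 0 < b v v) :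
    ∃ c > 0, ∀ v, c * ‖v‖ ^ 2 ≤ b v v := by
  cases subsingleton_or_nontrivial V
  · exact ⟨1, one_pos, fun v => by simp [Subsingleton.elim v 0]⟩
  obtain ⟨u, hu, hmin⟩ := (isCompact_sphere (0 : V) 1).exists_isMinOn
    (NormedSpace.sphere_nonempty.mpr zero_le_one) b.continuous_apply_self.continuousOn
  refine ⟨b u u, hpos u (ne_zero_of_mem_unit_sphere ⟨u, hu⟩), fun v => ?_⟩
  rcases eq_or_ne v 0 with rfl | hv
  · simp
  have hv' : ‖v‖ ≠ 0 := norm_ne_zero_iff.mpr hv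
  have hsphere : ‖v‖⁻¹ • v ∈ Metric.sphere (0 : V) 1 := by simp [norm_smul, hv']
  calc b u u * ‖v‖ ^ 2 ≤ b (‖v‖⁻¹ • v) (‖v‖⁻¹ • v) * ‖v‖ ^ 2 := by gcongr; exact hmin hsphere
    _ = b v v := by simp only [map_smul, smul_apply, smul_eq_mul]; field_simp

theorem exists_isMinOn (hpos : ∀ v ≠ 0, 0 < b v v) (A : V →ₗ[ℝ] W) (x₀ : V) :
    ∃ x, A x = A x₀ ∧ IsMinOn (fun z => b z z) {z | A z = A x₀} x := by
  obtain ⟨c, hc, hcoer⟩ := b.exists_pos_mul_norm_sq_le hpos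
  have hfar : ∀ᶠ z in cocompact V, b x₀ x₀ ≤ b z z :=
    (((tendsto_pow_atTop two_ne_zero).comp tendsto_norm_cocompact_atTop).const_mul_atTop hc
      |>.eventually_ge_atTop (b x₀ x₀)).mono fun z hz => hz.trans (hcoer z)
  exact b.continuous_apply_self.continuousOn.exists_isMinOn'
    (isClosed_eq A.continuous_of_finiteDimensional continuous_const) rfl
    (hfar.filter_mono inf_le_left)

theorem tendsto_zero_of_apply_self_le (hpos : ∀ v ≠ 0, 0 < b v v) {x : ι → V} {u : ι → ℝ}
    (hu : Tendsto u l (𝓝 0)) (hx : ∀ i, b (x i) (x i) ≤ u i) : Tendsto x l (𝓝 0) := by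
  obtain ⟨c, hc, hcoer⟩ := b.exists_pos_mul_norm_sq_le hpos
  refine tendsto_zero_of_norm_sq_le (by simpa using hu.div_const c) fun i => ?_
  rw [le_div_iff₀ hc, mul_comm]
  exact (hcoer _).trans (hx i)

theorem tendsto_regularized_minimizer [FiniteDimensional ℝ W] (hb : b.IsSymm)
    (hpos : ∀ v ≠ 0, 0 < b v v) {A : V →ₗ[ℝ] W} {x₀ x' : V} (hx' : A x' = A x₀)
    (hmin' : IsMinOn (fun z => b z z) {z | A z = A x₀} x') {y : ι → W} {ω : ι → ℝ}
    (hω : ∀ i, 0 < ω i) (hω0 : Tendsto ω l (𝓝 0))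
    (hratio : Tendsto (fun i => ‖y i - A x₀‖ ^ 2 / ω i) l (𝓝 0)) {x : ι → V}
    (hx : ∀ i z, 1 / 2 * ‖A (x i) - y i‖ ^ 2 + ω i * b (x i) (x i) ≤
      1 / 2 * ‖A z - y i‖ ^ 2 + ω i * b z z) :
    Tendsto x l (𝓝 x') := by
  set δsq := fun i => ‖y i - A x₀‖ ^ 2
  have hδ : Tendsto δsq l (𝓝 0) := by
    have := hratio.mul hω0
    rw [zero_mul] at this
    exact this.congr fun i => div_mul_cancel₀ _ (hω i).ne'
  have hcompare : ∀ i, 1 / 2 * ‖A (x i) - y i‖ ^ 2 + ω i * b (x i) (x i) ≤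
      1 / 2 * δsq i + ω i * b x' x' := fun i => by
    simpa [hx', norm_sub_rev] using hx i x'
  have hnonneg : ∀ v, 0 ≤ b v v := fun v => by
    rcases eq_or_ne v 0 with rfl | hv
    exacts [by simp, (hpos v hv).le]
  have hres : Tendsto (fun i => A (x i) - y i) l (𝓝 0) := by
    refine tendsto_zero_of_norm_sq_le (u := fun i => δsq i + 2 * ω i * b x' x') ?_ fun i => ?_
    · simpa using hδ.add ((hω0.const_mul 2).mul_const (b x' x'))
    · nlinarith [hcompare i, hnonneg (x i), hω i]
  have hAdiff : Tendsto (fun i => A (x i - x')) l (𝓝 0) := by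
    have hdata : Tendsto (fun i => y i - A x₀) l (𝓝 0) :=
      tendsto_zero_of_norm_sq_le hδ fun i => le_rfl
    simpa [hx'] using hres.add hdata
  have hlin : Tendsto (fun i => b x' (x i - x')) l (𝓝 0) :=
    LinearMap.tendsto_zero_of_ker_le_ker (fun v hv => b.apply_eq_zero_of_isMinOn hb hmin' hx' hv)
      hAdiff
  refine tendsto_sub_nhds_zero_iff.mp (b.tendsto_zero_of_apply_self_le hpos
    (u := fun i => δsq i / ω i / 2 - 2 * b x' (x i - x')) ?_ fun i => ?_)
  · simpa using (hratio.div_const 2).sub (hlin.const_mul 2)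
  · have hexp := b.apply_add_add_self hb x' (x i - x')
    rw [add_sub_cancel] at hexp
    have hexcess : ω i * (b (x i) (x i) - b x' x') ≤ 1 / 2 * δsq i := by
      nlinarith [hcompare i, sq_nonneg ‖A (x i) - y i‖]
    rw [div_div, le_sub_iff_add_le, le_div_iff₀ (by linarith [hω i])]
    nlinarith [hω i]

end FiniteDimensional

end LinearMap.BilinForm

attribute [local instance] Matrix.frobeniusNormedAddCommGroup Matrix.frobeniusNormedSpace

theorem frobNorm_eq_norm {m n : ℕ} (A : Matrix (Fin m) (Fin n) ℝ) : frobNorm A = ‖A‖ := by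
  rw [frobNorm, frobenius_norm_def, ← Real.sqrt_eq_rpow]
  congr 1
  simp only [trace, diag, mul_apply, transpose_apply, Real.norm_eq_abs, Real.rpow_two, sq_abs]
  rw [Finset.sum_comm]
  simp only [sq]

section FrobeniusForm

variable {n d : Type*} [Fintype n] [Fintype d]

def frobeniusForm (B : Matrix n n ℝ) : LinearMap.BilinForm ℝ (Matrix n d ℝ) :=
  LinearMap.mk₂ ℝ (fun U V => trace (Uᵀ * B * V))
    (fun _ _ _ => by simp [Matrix.add_mul, trace_add])
    (fun _ _ _ => by simp [Matrix.smul_mul, trace_smul])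
    (fun _ _ _ => by simp [Matrix.mul_add, trace_add])
    (fun _ _ _ => by simp [Matrix.mul_smul, trace_smul])

@[simp]
theorem frobeniusForm_apply (B : Matrix n n ℝ) (U V : Matrix n d ℝ) :
    frobeniusForm B U V = trace (Uᵀ * B * V) := rfl

theorem frobeniusForm_isSymm {B : Matrix n n ℝ} (hB : B.IsSymm) :
    (frobeniusForm (d := d) B).IsSymm := by
  refine ⟨fun U V => ?_⟩
  rw [frobeniusForm_apply, frobeniusForm_apply, ← trace_transpose]
  simp [transpose_mul, hB.eq, Matrix.mul_assoc]

theorem frobeniusForm_apply_self (B : Matrix n n ℝ) (E : Matrix n d ℝ) :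
    frobeniusForm B E E = ∑ j, Eᵀ j ⬝ᵥ B *ᵥ Eᵀ j := by
  simp only [frobeniusForm_apply, trace, diag, mul_apply, dotProduct, mulVec, transpose_apply,
    Finset.mul_sum, Finset.sum_mul]
  refine Finset.sum_congr rfl fun j _ => ?_
  rw [Finset.sum_comm]
  simp only [mul_assoc]

theorem frobeniusForm_pos {B : Matrix n n ℝ} (hB : B.PosDef) {E : Matrix n d ℝ} (hE : E ≠ 0) :
    0 < frobeniusForm B E E := by
  rw [frobeniusForm_apply_self]
  obtain ⟨j, hj⟩ : ∃ j, Eᵀ j ≠ 0 := by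
    by_contra! h
    exact hE (by simpa using (transpose_eq_zero.mp (funext h)))
  refine Finset.sum_pos' (fun j _ => ?_) ⟨j, Finset.mem_univ j, ?_⟩
  · simpa using hB.posSemidef.dotProduct_mulVec_nonneg (Eᵀ j)
  · simpa using hB.dotProduct_mulVec_pos hj

end FrobeniusForm

theorem convergent_regularization_general
    (N D M : ℕ)
    (B : Matrix (Fin N) (Fin N) ℝ) (hB : B.PosDef)
    (R : Matrix (Fin N) (Fin D) ℝ → ℝ)
    (hR : ∀ Θ, R Θ = Matrix.trace (Θᵀ * B * Θ))
    (Φ : Matrix (Fin N) (Fin D) ℝ)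
    (Φhat : ℕ → Matrix (Fin M) (Fin D) ℝ)
    (ω : ℕ → ℝ) (hωpos : ∀ n, 0 < ω n)
    (δ : ℕ → ℝ) (hδ : ∀ n, δ n = frobNorm (Φhat n - extractP M N * Φ))
    (hω0 : Tendsto ω atTop (nhds 0))
    (hratio : Tendsto (fun n => (δ n) ^ 2 / ω n) atTop (nhds 0))
    (Φstar : ℕ → Matrix (Fin N) (Fin D) ℝ)
    (hmin : ∀ n, ∀ Θ : Matrix (Fin N) (Fin D) ℝ,
      (1 / 2) * (frobNorm (extractP M N * Φstar n - Φhat n)) ^ 2 + ω n * R (Φstar n) ≤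
      (1 / 2) * (frobNorm (extractP M N * Θ - Φhat n)) ^ 2 + ω n * R Θ) :
    ∃ Φinf : Matrix (Fin N) (Fin D) ℝ,
      extractP M N * Φinf = extractP M N * Φ ∧
      (∀ Θ, extractP M N * Θ = extractP M N * Φ → R Φinf ≤ R Θ) ∧
      (∀ Θ', extractP M N * Θ' = extractP M N * Φ →
        (∀ Θ, extractP M N * Θ = extractP M N * Φ → R Θ' ≤ R Θ) → Θ' = Φinf) ∧
      Tendsto Φstar atTop (nhds Φinf) := by
  set A := mulLeftLinearMap (Fin D) ℝ (extractP M N)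
  set b : LinearMap.BilinForm ℝ (Matrix (Fin N) (Fin D) ℝ) := frobeniusForm B
  have hb : b.IsSymm := frobeniusForm_isSymm (isHermitian_iff_isSymm.mp hB.isHermitian)
  have hpos : ∀ E ≠ 0, 0 < b E E := fun E => frobeniusForm_pos hB
  obtain rfl : R = fun Θ => b Θ Θ := funext hR
  obtain rfl : δ = fun n => ‖Φhat n - A Φ‖ := funext fun n => (hδ n).trans (frobNorm_eq_norm _)
  simp only [frobNorm_eq_norm] at hmin
  obtain ⟨Φinf, hPinf, hminOn⟩ := b.exists_isMinOn hpos A Φ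
  exact ⟨Φinf, hPinf, hminOn,
    fun Θ' hΘ' hminOn' => b.eq_of_isMinOn hb hpos hminOn hPinf hminOn' hΘ',
    b.tendsto_regularized_minimizer hb hpos hPinf hminOn hωpos hω0 hratio hmin⟩

/-- Theorem 5.2 (convergent regularization): if the high-fidelity error `δ_n → 0`,
the regularization strengths `ω_n → 0`, and `δ_n²/ω_n → 0`, then the minimizers
`Φ_n*` of `J_n` converge to the unique minimizer of `R` on `{Θ : PΘ = PΦ}`. -/
theorem convergent_regularization
    (N D M : ℕ) (hN : 0 < N) (hD : 0 < D) (hM : 0 < M) (hMN : M ≤ N)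
    (B : Matrix (Fin N) (Fin N) ℝ) (hB : B.PosDef)
    (R : Matrix (Fin N) (Fin D) ℝ → ℝ)
    (hR : ∀ Θ, R Θ = Matrix.trace (Θᵀ * B * Θ))
    (Φ : Matrix (Fin N) (Fin D) ℝ)
    (Φhat : ℕ → Matrix (Fin M) (Fin D) ℝ)
    (ω : ℕ → ℝ) (hωpos : ∀ n, 0 < ω n)
    (δ : ℕ → ℝ) (hδ : ∀ n, δ n = frobNorm (Φhat n - extractP M N * Φ))
    (hδ0 : Tendsto δ atTop (nhds 0))
    (hω0 : Tendsto ω atTop (nhds 0))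
    (hratio : Tendsto (fun n => (δ n) ^ 2 / ω n) atTop (nhds 0))
    (Φstar : ℕ → Matrix (Fin N) (Fin D) ℝ)
    (hmin : ∀ n, ∀ Θ : Matrix (Fin N) (Fin D) ℝ,
      (1 / 2) * (frobNorm (extractP M N * Φstar n - Φhat n)) ^ 2 + ω n * R (Φstar n) ≤
      (1 / 2) * (frobNorm (extractP M N * Θ - Φhat n)) ^ 2 + ω n * R Θ) :
    ∃ Φinf : Matrix (Fin N) (Fin D) ℝ,
      extractP M N * Φinf = extractP M N * Φ ∧
      (∀ Θ, extractP M N * Θ = extractP M N * Φ → R Φinf ≤ R Θ) ∧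
      (∀ Θ', extractP M N * Θ' = extractP M N * Φ →
        (∀ Θ, extractP M N * Θ = extractP M N * Φ → R Θ' ≤ R Θ) → Θ' = Φinf) ∧
      Tendsto Φstar atTop (nhds Φinf) :=
  convergent_regularization_general N D M B hB R hR Φ Φhat ω hωpos δ hδ hω0 hratio Φstar hmin
end

section
/- Let Ũ ∈ ℝ^{N×K} satisfy Ũᵀ Ũ = I_K, let Σ ∈ ℝ^{K×K}, let τ ∈ ℝ, and let β be a natural number with β ≥ 1. Then ((1+τ) I_N − Ũ Σ Ũᵀ)^β = (1+τ)^β I_N + Ũ ( ((1+τ) I_K − Σ)^β − (1+τ)^β I_K ) Ũᵀ. -/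
open Matrix

/-- Low-rank power identity of Section 3.2.1: for `Ũ` with orthonormal columns,
`((1+τ)I_N − ŨΣŨᵀ)^β = (1+τ)^β I_N + Ũ(((1+τ)I_K − Σ)^β − (1+τ)^β I_K)Ũᵀ`. -/
theorem lowrank_power_identity
    (N K : ℕ) (hK : 0 < K) (hKN : K ≤ N)
    (U : Matrix (Fin N) (Fin K) ℝ) (hU : Uᵀ * U = 1)
    (S : Matrix (Fin K) (Fin K) ℝ)
    (τ : ℝ) (β : ℕ) (hβ : 1 ≤ β) :
    ((1 + τ) • (1 : Matrix (Fin N) (Fin N) ℝ) - U * S * Uᵀ) ^ β =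
      (1 + τ) ^ β • (1 : Matrix (Fin N) (Fin N) ℝ) +
      U * (((1 + τ) • (1 : Matrix (Fin K) (Fin K) ℝ) - S) ^ β -
        (1 + τ) ^ β • (1 : Matrix (Fin K) (Fin K) ℝ)) * Uᵀ := by
  clear hβ hK hKN
  have key : ∀ M : Matrix (Fin K) (Fin K) ℝ,
      U * M * Uᵀ * (U * S * Uᵀ) = U * (M * S) * Uᵀ := by
    intro M
    calc U * M * Uᵀ * (U * S * Uᵀ) = U * (M * ((Uᵀ * U) * (S * Uᵀ))) := by
          simp only [Matrix.mul_assoc]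
    _ = U * (M * S) * Uᵀ := by rw [hU]; simp [Matrix.mul_assoc]
  induction β with
  | zero => simp
  | succ n ih =>
    rw [pow_succ, pow_succ, ih]
    simp only [Matrix.add_mul, Matrix.sub_mul, Matrix.mul_sub, Matrix.mul_add,
      Matrix.smul_mul, Matrix.mul_smul, Matrix.mul_one, Matrix.one_mul, key,
      smul_smul, sub_mul, mul_sub, smul_sub]
    have h1 : U * Uᵀ * (U * S * Uᵀ) = U * S * Uᵀ := by
      calc U * Uᵀ * (U * S * Uᵀ) = U * ((Uᵀ * U) * (S * Uᵀ)) := by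
            simp only [Matrix.mul_assoc]
      _ = U * S * Uᵀ := by rw [hU]; simp [Matrix.mul_assoc]
    rw [h1, pow_succ]
    simp only [Matrix.mul_sub, Matrix.sub_mul, Matrix.mul_smul, Matrix.smul_mul,
      Matrix.mul_one, Matrix.one_mul, Matrix.mul_assoc]
    module
end

section
/- Let U, V ∈ ℝ^{N×K} satisfy Vᵀ U = I_K, let S ∈ ℝ^{K×K}, let τ ∈ ℝ, and let β be a natural number with β ≥ 1. Then ((1+τ) I_N − U S Vᵀ)^β = (1+τ)^β I_N + U ( ((1+τ) I_K − S)^β − (1+τ)^β I_K ) Vᵀ. -/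
open Matrix

/-- Biorthogonal low-rank power identity of Appendix A: if `Vᵀ U = I_K`, then
`((1+τ)I_N − U S Vᵀ)^β = (1+τ)^β I_N + U(((1+τ)I_K − S)^β − (1+τ)^β I_K)Vᵀ`. -/
theorem biorthogonal_lowrank_power_identity
    (N K : ℕ) (hK : 0 < K) (hKN : K ≤ N)
    (U V : Matrix (Fin N) (Fin K) ℝ) (hUV : Vᵀ * U = 1)
    (S : Matrix (Fin K) (Fin K) ℝ)
    (τ : ℝ) (β : ℕ) (hβ : 1 ≤ β) :
    ((1 + τ) • (1 : Matrix (Fin N) (Fin N) ℝ) - U * S * Vᵀ) ^ β =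
      (1 + τ) ^ β • (1 : Matrix (Fin N) (Fin N) ℝ) +
      U * (((1 + τ) • (1 : Matrix (Fin K) (Fin K) ℝ) - S) ^ β -
        (1 + τ) ^ β • (1 : Matrix (Fin K) (Fin K) ℝ)) * Vᵀ := by
  have hmul : ∀ (B : Matrix (Fin K) (Fin K) ℝ),
      U * B * Vᵀ * (U * S * Vᵀ) = U * (B * S) * Vᵀ := by
    intro B
    calc U * B * Vᵀ * (U * S * Vᵀ) = U * (B * ((Vᵀ * U) * (S * Vᵀ))) := by
          simp only [Matrix.mul_assoc]
      _ = U * (B * S) * Vᵀ := by rw [hUV]; simp only [Matrix.mul_assoc, Matrix.one_mul]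
  induction β, hβ using Nat.le_induction with
  | base =>
    rw [pow_one, pow_one, pow_one]
    rw [sub_sub_cancel_left, Matrix.mul_neg, Matrix.neg_mul]
    abel
  | succ n hn ih =>
    set a := 1 + τ with ha
    set X := a • (1 : Matrix (Fin K) (Fin K) ℝ) - S with hX
    have hB : X ^ (n+1) - a^(n+1) • (1 : Matrix (Fin K) (Fin K) ℝ) =
        a • (X^n - a^n • 1) - (X^n - a^n • 1) * S - a^n • S := by
      rw [pow_succ, hX, mul_sub, Matrix.mul_smul, mul_one, sub_mul, Matrix.smul_mul,
        one_mul, smul_sub, smul_smul, pow_succ]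
      abel_nf
      ring_nf
    rw [pow_succ, ih, hB]
    rw [add_mul, mul_sub, mul_sub, Matrix.smul_mul, Matrix.smul_mul, one_mul,
      Matrix.mul_smul, hmul (X^n - a^n • 1)]
    simp only [Matrix.mul_sub, Matrix.sub_mul, Matrix.mul_smul, Matrix.smul_mul,
      Matrix.mul_one, Matrix.one_mul, smul_smul, smul_sub, pow_succ]
    abel
end
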